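/- Fix n : ℕ, λ ∈ [0,1], and α : ℕ. For every input x : Fin n → Bool with count(x) = i, the windowed accuracy probability of the counting randomized response at x equals that at the representative rep_i (where rep_i j = (j < i)): ∑_{k ∈ Finset.Icc (i - α) (i + α)} (RRcount_λ(x))(k) = ∑_{k ∈ Finset.Icc (i - α) (i + α)} (RRcount_λ(rep_i))(k), and count(rep_i) = i. Consequently the set {rep_i : 0 ≤ i ≤ n} is an accuracy set for RRcount_λ with target values V x = count(x). -/

import Mathlib

/-- `n` independent Bernoulli(`lam`) coin flips, as an `n`-fold monadic bind in the
`PMF` monad. -/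
noncomputable def coins (lam : ℝ) (h1 : lam ≤ 1) : (n : ℕ) → PMF (Fin n → Bool)
  | 0 => PMF.pure fun _ => false
  | n + 1 =>
      (PMF.bernoulli (Real.toNNReal lam) (Real.toNNReal_le_one.mpr h1)).bind fun b =>
        (coins lam h1 n).bind fun rest => PMF.pure (Fin.cons b rest)

/-- Binary randomized response with flip probability `lam`. -/
noncomputable def RR (n : ℕ) (lam : ℝ) (h1 : lam ≤ 1) (x : Fin n → Bool) :
    PMF (Fin n → Bool) :=
  (coins lam h1 n).map fun θ i => xor (x i) (θ i)

/-- The counting query: number of `true` coordinates. -/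
def count {n : ℕ} (y : Fin n → Bool) : ℕ :=
  (Finset.univ.filter fun i => y i = true).card

/-- Randomized response followed by the counting query. -/
noncomputable def RRcount (n : ℕ) (lam : ℝ) (h1 : lam ≤ 1) (x : Fin n → Bool) :
    PMF ℕ :=
  (RR n lam h1 x).map count

/-- The representative input `rep n i`: `i` ones followed by `n - i` zeros. -/
def rep (n : ℕ) (i : ℕ) : Fin n → Bool := fun j => decide ((j : ℕ) < i)

lemma coins_apply (lam : ℝ) (h1 : lam ≤ 1) (n : ℕ) (θ : Fin n → Bool) :
    coins lam h1 n θ =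
      ∏ i, (bif θ i then ENNReal.ofReal lam else 1 - ENNReal.ofReal lam) := by
  induction n with
  | zero =>
    have hθ : θ = fun _ => false := funext fun i => i.elim0
    subst hθ
    simp [coins]
  | succ n ih =>
    have key : coins lam h1 (n + 1) θ =
        (bif θ 0 then ENNReal.ofReal lam else 1 - ENNReal.ofReal lam) *
          coins lam h1 n (Fin.tail θ) := by
      have inner : ∀ b : Bool,
          ((coins lam h1 n).bind fun rest => PMF.pure (Fin.cons b rest)) θ =
            if b = θ 0 then coins lam h1 n (Fin.tail θ) else 0 := by
        intro b
        rw [PMF.bind_apply]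
        by_cases hb : b = θ 0
        · subst hb
          rw [if_pos rfl]
          rw [tsum_eq_single (Fin.tail θ)]
          · rw [PMF.pure_apply, if_pos (Fin.cons_self_tail θ).symm, mul_one]
          · intro rest hrest
            have : θ ≠ Fin.cons (θ 0) rest := by
              intro h
              exact hrest (by rw [h]; rfl)
            simp [PMF.pure_apply, this]
        · rw [if_neg hb]
          apply ENNReal.tsum_eq_zero.mpr
          intro rest
          have : θ ≠ Fin.cons b rest := by
            intro h
            exact hb (by rw [h]; simp)
          simp [PMF.pure_apply, this]
      show ((PMF.bernoulli (Real.toNNReal lam) (Real.toNNReal_le_one.mpr h1)).bind fun b =>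
        (coins lam h1 n).bind fun rest => PMF.pure (Fin.cons b rest)) θ = _
      rw [PMF.bind_apply, tsum_bool, inner, inner]
      cases h0 : θ 0 <;> simp [PMF.bernoulli_apply, h0, ENNReal.ofReal]
    rw [key, Fin.prod_univ_succ, ih]
    rfl

lemma count_comp {n : ℕ} (σ : Equiv.Perm (Fin n)) (y : Fin n → Bool) :
    count (fun i => y (σ i)) = count y := by
  rw [count, count, ← Fintype.card_subtype, ← Fintype.card_subtype]
  exact Fintype.card_congr (σ.subtypeEquiv fun i => Iff.rfl)

lemma coins_comp (lam : ℝ) (h1 : lam ≤ 1) {n : ℕ} (σ : Equiv.Perm (Fin n))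
    (θ : Fin n → Bool) :
    coins lam h1 n (fun i => θ (σ i)) = coins lam h1 n θ := by
  rw [coins_apply, coins_apply]
  exact Equiv.prod_comp σ fun i => bif θ i then ENNReal.ofReal lam else 1 - ENNReal.ofReal lam

lemma RRcount_comp (n : ℕ) (lam : ℝ) (h1 : lam ≤ 1) (σ : Equiv.Perm (Fin n))
    (x : Fin n → Bool) :
    RRcount n lam h1 (fun j => x (σ j)) = RRcount n lam h1 x := by
  ext k
  rw [RRcount, RRcount, RR, RR, PMF.map_comp, PMF.map_comp, PMF.map_apply, PMF.map_apply]
  simp only [Function.comp]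
  refine Eq.trans (Equiv.tsum_eq (Equiv.arrowCongr σ.symm (Equiv.refl Bool)) _).symm ?_
  congr 1
  funext θ
  have harr : (Equiv.arrowCongr σ.symm (Equiv.refl Bool)) θ = fun i => θ (σ i) := by
    funext i; simp [Equiv.arrowCongr]
  rw [harr]
  simp only [count_comp σ (fun i => xor (x i) (θ i)), coins_comp lam h1 σ θ]
  congr

lemma card_subtype_lt {n i : ℕ} (h : i ≤ n) :
    Fintype.card {j : Fin n // (j : ℕ) < i} = i := by
  rw [Fintype.card_congr
    (⟨fun j => (⟨j.1, j.2⟩ : Fin i), fun k => ⟨⟨k.1, lt_of_lt_of_le k.2 h⟩, k.2⟩,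
      fun _ => rfl, fun _ => rfl⟩ : {j : Fin n // (j : ℕ) < i} ≃ Fin i)]
  exact Fintype.card_fin i

lemma count_rep {n i : ℕ} (h : i ≤ n) : count (rep n i) = i := by
  have : count (rep n i) = Fintype.card {j : Fin n // (j : ℕ) < i} := by
    rw [count, ← Fintype.card_subtype]
    apply Fintype.card_congr
    exact Equiv.subtypeEquivRight fun j => by simp [rep]
  rw [this, card_subtype_lt h]

lemma count_le {n : ℕ} (x : Fin n → Bool) : count x ≤ n := by
  rw [count]
  calc (Finset.univ.filter fun i => x i = true).card ≤ (Finset.univ : Finset (Fin n)).card :=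
        Finset.card_filter_le _ _
    _ = n := by simp

/-- For every input `x` with `count x = i`, the windowed accuracy probability of
counting randomized response at `x` equals that at the representative `rep n i`,
and `count (rep n i) = i`; consequently `{rep n i : i ≤ n}` is an accuracy set for
`RRcount` with target values `V x = count x`. -/
theorem RRcount_accuracy_set (n : ℕ) (lam : ℝ) (h0 : 0 ≤ lam) (h1 : lam ≤ 1)
    (α : ℕ) :
    (∀ (x : Fin n → Bool) (i : ℕ), count x = i →
      (∑ k ∈ Finset.Icc (i - α) (i + α), RRcount n lam h1 x k) =
        (∑ k ∈ Finset.Icc (i - α) (i + α), RRcount n lam h1 (rep n i) k) ∧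
      count (rep n i) = i) ∧
    (∀ x : Fin n → Bool, ∃ i : ℕ, i ≤ n ∧
      (∑ k ∈ Finset.Icc (count x - α) (count x + α), RRcount n lam h1 x k) =
        ∑ k ∈ Finset.Icc (count (rep n i) - α) (count (rep n i) + α),
          RRcount n lam h1 (rep n i) k) := by
  have main : ∀ (x : Fin n → Bool) (i : ℕ), count x = i →
      RRcount n lam h1 x = RRcount n lam h1 (rep n i) := by
    intro x i hx
    have hin : i ≤ n := hx ▸ count_le x
    have hcards : Fintype.card {j : Fin n // x j = true} =
        Fintype.card {j : Fin n // (j : ℕ) < i} := by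
      rw [card_subtype_lt hin, Fintype.card_subtype, ← count, hx]
    let e := Fintype.equivOfCardEq hcards
    have hσ : ∀ j, x j = rep n i (e.extendSubtype j) := by
      intro j
      by_cases hj : x j = true
      · have := Equiv.extendSubtype_mem e j hj
        simp [rep, this, hj]
      · have := Equiv.extendSubtype_not_mem e j hj
        simp only [Bool.not_eq_true] at hj
        simp [rep, this, hj]
    have : x = fun j => rep n i (e.extendSubtype j) := funext hσ
    rw [this, RRcount_comp]
  constructor
  · intro x i hx
    exact ⟨by rw [main x i hx], count_rep (hx ▸ count_le x)⟩
  · intro x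
    refine ⟨count x, count_le x, ?_⟩
    rw [main x (count x) rfl, count_rep (count_le x)]
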